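/- Let κ₁, κ₂, κ₃, C > 0 with κ₂ ≥ 1, let E₀ ≥ 0, and let E : [0,∞) → [0,∞) be continuous with E(0) ≤ κ₂E₀. Suppose that for every t ≥ 0, E(t) ≤ κ₂E₀ + C(κ₁ E(t)^{3/2} + κ₂κ₃ E(t)²). If Cκ₁(2κ₂E₀)^{1/2} + Cκ₂κ₃(2κ₂E₀) ≤ 1/4, then E(t) ≤ 2κ₂E₀ for every t ≥ 0. -/

import Mathlib

/-!
Write `g v = C κ₁ v^{1/2} + C κ₂ κ₃ v`, so that the hypothesis reads `E ≤ κ₂ E₀ + g(E) E`.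
A value `v > 4/3 κ₂ E₀` with `g v ≤ 1/4` is never taken by `E`, since it would give
`v ≤ κ₂ E₀ + v/4`. As `E 0 ≤ κ₂ E₀ < v` and `E` is continuous on the connected half-line,
`E` stays below every such `v`. For `E₀ > 0` take `v = 2 κ₂ E₀`; for `E₀ = 0` let `v → 0⁺`.
-/

open Set Filter Topology

theorem IsPreconnected.lt_of_forall_ne {X α : Type*} [TopologicalSpace X] [LinearOrder α]
    [TopologicalSpace α] [OrderClosedTopology α] {s : Set X} (hs : IsPreconnected s)
    {f : X → α} (hf : ContinuousOn f s) {a : X} (ha : a ∈ s) {v : α} (hfa : f a < v)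
    (hne : ∀ x ∈ s, f x ≠ v) : ∀ x ∈ s, f x < v := by
  intro x hx
  by_contra! hvx
  obtain ⟨y, hy, hfy⟩ := hs.intermediate_value ha hx hf ⟨hfa.le, hvx⟩
  exact hne y hy hfy

theorem Real.rpow_three_halves {x : ℝ} (hx : 0 ≤ x) : x ^ ((3 : ℝ) / 2) = x * x ^ ((1 : ℝ) / 2) := by
  rw [← Real.rpow_one_add' hx (by norm_num)]
  norm_num

theorem le_of_le_add_rpow_three_halves_add_sq {a α β v : ℝ} (hv : 0 ≤ v)
    (hsmall : α * v ^ ((1 : ℝ) / 2) + β * v ≤ 1 / 4)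
    (h : v ≤ a + (α * v ^ ((3 : ℝ) / 2) + β * v ^ 2)) : v ≤ 4 / 3 * a := by
  have hsuper : α * v ^ ((3 : ℝ) / 2) + β * v ^ 2 ≤ v / 4 :=
    calc α * v ^ ((3 : ℝ) / 2) + β * v ^ 2 = (α * v ^ ((1 : ℝ) / 2) + β * v) * v := by
          rw [Real.rpow_three_halves hv]; ring
      _ ≤ 1 / 4 * v := mul_le_mul_of_nonneg_right hsmall hv
      _ = v / 4 := by ring
  linarith

theorem le_zero_of_forall_lt_of_tendsto_zero {g : ℝ → ℝ} {x c : ℝ} (hg : Tendsto g (𝓝 0) (𝓝 0))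
    (hc : 0 < c) (h : ∀ v, 0 < v → g v ≤ c → x < v) : x ≤ 0 := by
  have hev : ∀ᶠ v in 𝓝[>] 0, x ≤ v := by
    filter_upwards [self_mem_nhdsWithin, nhdsWithin_le_nhds (hg.eventually (ge_mem_nhds hc))]
      with v hv hgv
    exact (h v hv hgv).le
  exact ge_of_tendsto (tendsto_id.mono_left nhdsWithin_le_nhds) hev

theorem stmt18_general (κ₁ κ₂ κ₃ C E₀ : ℝ) (hκ₂ : 0 < κ₂)
    (hE₀ : 0 ≤ E₀) (E : ℝ → ℝ)
    (hEcont : ContinuousOn E (Set.Ici 0))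
    (hE0 : E 0 ≤ κ₂ * E₀)
    (hboot : ∀ t, 0 ≤ t → E t ≤ κ₂ * E₀ + C * (κ₁ * E t ^ ((3:ℝ)/2) + κ₂ * κ₃ * E t ^ 2))
    (hsmall : C * κ₁ * (2 * κ₂ * E₀) ^ ((1:ℝ)/2) + C * κ₂ * κ₃ * (2 * κ₂ * E₀) ≤ 1/4) :
    ∀ t, 0 ≤ t → E t ≤ 2 * κ₂ * E₀ := by
  intro t ht
  have hκ₂E₀ : 0 ≤ κ₂ * E₀ := mul_nonneg hκ₂.le hE₀
  have below : ∀ v, 4 / 3 * (κ₂ * E₀) < v →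
      C * κ₁ * v ^ ((1:ℝ)/2) + C * κ₂ * κ₃ * v ≤ 1/4 → E t < v := by
    intro v hv hgv
    refine isPreconnected_Ici.lt_of_forall_ne hEcont self_mem_Ici (by linarith) ?_ t ht
    rintro s hs rfl
    refine hv.not_ge (le_of_le_add_rpow_three_halves_add_sq (by linarith) hgv ?_)
    simpa only [mul_add, mul_assoc] using hboot s hs
  rcases hE₀.eq_or_lt with rfl | hpos
  · have hg : Continuous fun v : ℝ => C * κ₁ * v ^ ((1:ℝ)/2) + C * κ₂ * κ₃ * v := by
      fun_prop (disch := norm_num)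
    have hE : E t ≤ 0 :=
      le_zero_of_forall_lt_of_tendsto_zero (by simpa using hg.tendsto 0)
        (by norm_num : (0:ℝ) < 1/4) fun v hv => below v (by simpa using hv)
    simpa using hE
  · exact (below _ (by nlinarith) hsmall).le

/-- a continuity (bootstrap) argument. -/
theorem stmt18 (κ₁ κ₂ κ₃ C E₀ : ℝ) (hκ₁ : 0 < κ₁) (hκ₂ : 0 < κ₂) (hκ₃ : 0 < κ₃)
    (hC : 0 < C) (hκ₂1 : 1 ≤ κ₂) (hE₀ : 0 ≤ E₀) (E : ℝ → ℝ)
    (hEcont : ContinuousOn E (Set.Ici 0))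
    (hEnonneg : ∀ t, 0 ≤ t → 0 ≤ E t)
    (hE0 : E 0 ≤ κ₂ * E₀)
    (hboot : ∀ t, 0 ≤ t → E t ≤ κ₂ * E₀ + C * (κ₁ * E t ^ ((3:ℝ)/2) + κ₂ * κ₃ * E t ^ 2))
    (hsmall : C * κ₁ * (2 * κ₂ * E₀) ^ ((1:ℝ)/2) + C * κ₂ * κ₃ * (2 * κ₂ * E₀) ≤ 1/4) :
    ∀ t, 0 ≤ t → E t ≤ 2 * κ₂ * E₀ :=
  stmt18_general κ₁ κ₂ κ₃ C E₀ hκ₂ hE₀ E hEcont hE0 hboot hsmall
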